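/- Every metrizable coarse space is normal: if the coarse structure 𝓔 on X is generated by a metric d (entourages are the sets {(x,y) : d(x,y) ≤ r}, r ≥ 0, and their subsets containing the diagonal), then any two asymptotically disjoint subsets Y, Z of X have disjoint asymptotic neighborhoods. -/

import Mathlib

def relComp {X : Type*} (ε δ : Set (X × X)) : Set (X × X) :=
  {p | ∃ y, (p.1, y) ∈ ε ∧ (y, p.2) ∈ δ}

def relInv {X : Type*} (ε : Set (X × X)) : Set (X × X) :=
  {p | (p.2, p.1) ∈ ε}

def IsBallStructure {X : Type*} (E : Set (Set (X × X))) : Prop :=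
  (∀ ε ∈ E, Set.diagonal X ⊆ ε) ∧
  (∀ ε ∈ E, ∀ δ ∈ E, ∃ lam ∈ E, relComp ε (relInv δ) ⊆ lam) ∧
  ⋃₀ E = Set.univ

def IsCoarseStructure {X : Type*} (E : Set (Set (X × X))) : Prop :=
  IsBallStructure E ∧
  ∀ ε ∈ E, ∀ δ : Set (X × X), Set.diagonal X ⊆ δ → δ ⊆ ε → δ ∈ E

def ball {X : Type*} (ε : Set (X × X)) (x : X) : Set X :=
  {y | (x, y) ∈ ε}

/-- `B(Y,ε) = ⋃_{y ∈ Y} B(y,ε)`. -/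
def ballOf {X : Type*} (ε : Set (X × X)) (Y : Set X) : Set X :=
  {x | ∃ y ∈ Y, (y, x) ∈ ε}

def IsBoundedIn {X : Type*} (E : Set (Set (X × X))) (B : Set X) : Prop :=
  B = ∅ ∨ ∃ x : X, ∃ ε ∈ E, B ⊆ ball ε x

/-- `Y` and `Z` are asymptotically disjoint. -/
def AsympDisjoint {X : Type*} (E : Set (Set (X × X))) (Y Z : Set X) : Prop :=
  ∀ ε ∈ E, IsBoundedIn E (ballOf ε Y ∩ ballOf ε Z)

/-- `U` is an asymptotic neighborhood of `A`. -/
def IsAsympNbhd {X : Type*} (E : Set (Set (X × X))) (U A : Set X) : Prop :=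
  AsympDisjoint E A Uᶜ

/-- The coarse structure generated by a metric. -/
def metricCoarse (X : Type*) [MetricSpace X] : Set (Set (X × X)) :=
  {ε | Set.diagonal X ⊆ ε ∧ ∃ r : ℝ, ∀ p ∈ ε, dist p.1 p.2 ≤ r}

/- Take `U = {x | d(x, Y) < d(x, Z)}` and `V = {x | d(x, Z) < d(x, Y)}`. If `x` is within `r` of
`Y` and of a point `u ∉ U`, then `d(u, Z) ≤ d(u, Y) ≤ 2r`, so `x` is within `3r` of `Z`; hence
`B(Y, r) ∩ B(Uᶜ, r) ⊆ B(Y, 3r + 1) ∩ B(Z, 3r + 1)`, which is bounded. Extended distances, with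
`d(x, ∅) = ⊤`, make this work without a case split on emptiness. -/

open Metric

lemma IsBoundedIn.mono {X : Type*} {E : Set (Set (X × X))} {B B' : Set X}
    (h : IsBoundedIn E B') (hB : B ⊆ B') : IsBoundedIn E B := by
  rcases h with rfl | ⟨x, ε, hε, hB'⟩
  · exact Or.inl (Set.subset_empty_iff.mp hB)
  · exact Or.inr ⟨x, ε, hε, hB.trans hB'⟩

lemma AsympDisjoint.symm {X : Type*} {E : Set (Set (X × X))} {Y Z : Set X}
    (h : AsympDisjoint E Y Z) : AsympDisjoint E Z Y := fun ε hε =>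
  (h ε hε).mono (Set.inter_comm _ _).subset

lemma ballOf_mono {X : Type*} {ε δ : Set (X × X)} (h : ε ⊆ δ) (Y : Set X) :
    ballOf ε Y ⊆ ballOf δ Y := fun _ ⟨y, hy, hyx⟩ => ⟨y, hy, h hyx⟩

lemma infEDist_le_edist_add_edist_of_infEDist_le {X : Type*} [PseudoEMetricSpace X]
    {Y Z : Set X} {u y : X} (hu : infEDist u Z ≤ infEDist u Y) (hy : y ∈ Y) (x : X) :
    infEDist x Z ≤ edist x u + edist u y :=
  calc infEDist x Z ≤ infEDist u Z + edist x u := infEDist_le_infEDist_add_edist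
    _ ≤ edist u y + edist x u := by gcongr; exact hu.trans (infEDist_le_edist_of_mem hy)
    _ = edist x u + edist u y := add_comm _ _

section Metric

variable {X : Type*} [MetricSpace X]

lemma setOf_dist_le_mem_metricCoarse {r : ℝ} (hr : 0 ≤ r) :
    {p : X × X | dist p.1 p.2 ≤ r} ∈ metricCoarse X :=
  ⟨fun p (hp : p.1 = p.2) => by simpa [hp] using hr, r, fun _ hp => hp⟩

lemma exists_nonneg_subset_setOf_dist_le {ε : Set (X × X)} (hε : ε ∈ metricCoarse X) :
    ∃ r, 0 ≤ r ∧ ε ⊆ {p | dist p.1 p.2 ≤ r} := by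
  obtain ⟨-, r, hr⟩ := hε
  exact ⟨max r 0, le_max_right _ _, fun p hp => (hr p hp).trans (le_max_left _ _)⟩

theorem isAsympNbhd_setOf_infEDist_lt {Y Z : Set X}
    (h : AsympDisjoint (metricCoarse X) Y Z) :
    IsAsympNbhd (metricCoarse X) {x | infEDist x Y < infEDist x Z} Y := by
  intro ε hε
  obtain ⟨r, hr, hεr⟩ := exists_nonneg_subset_setOf_dist_le hε
  have hR : r ≤ 3 * r + 1 := by linarith
  refine (h _ (setOf_dist_le_mem_metricCoarse (r := 3 * r + 1) (by positivity))).mono ?_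
  rintro x ⟨hxY, u, hu, hux⟩
  refine ⟨ballOf_mono (hεr.trans fun p hp => le_trans hp hR) Y hxY, ?_⟩
  obtain ⟨y, hy, hyx⟩ := hxY
  have hyx : dist y x ≤ r := hεr hyx
  have hux : dist u x ≤ r := hεr hux
  have hxZ : infEDist x Z < ENNReal.ofReal (3 * r + 1) := by
    calc infEDist x Z ≤ edist x u + edist u y :=
          infEDist_le_edist_add_edist_of_infEDist_le (not_lt.mp hu) hy x
      _ = ENNReal.ofReal (dist x u + dist u y) := by
          rw [edist_dist, edist_dist, ENNReal.ofReal_add dist_nonneg dist_nonneg]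
      _ < ENNReal.ofReal (3 * r + 1) := by
          rw [ENNReal.ofReal_lt_ofReal_iff (by positivity)]
          linarith [dist_triangle u x y, dist_comm x u, dist_comm x y]
  obtain ⟨z, hz, hxz⟩ := infEDist_lt_iff.mp hxZ
  exact ⟨z, hz, by rw [Set.mem_ofPred_eq, dist_comm]; exact (edist_lt_ofReal.mp hxz).le⟩

end Metric

theorem stmt16 {X : Type*} [MetricSpace X] (Y Z : Set X)
    (h : AsympDisjoint (metricCoarse X) Y Z) :
    ∃ U V : Set X, Disjoint U V ∧ IsAsympNbhd (metricCoarse X) U Y ∧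
      IsAsympNbhd (metricCoarse X) V Z :=
  ⟨{x | infEDist x Y < infEDist x Z}, {x | infEDist x Z < infEDist x Y},
    Set.disjoint_left.mpr fun _ hxY hxZ => lt_asymm (α := ENNReal) hxY hxZ,
    isAsympNbhd_setOf_infEDist_lt h, isAsympNbhd_setOf_infEDist_lt h.symm⟩
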